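/- Let K be a field, n ≥ 2 an integer, and m ≥ 1. Let I_1,…,I_m and J_1,…,J_m be words over {1,…,n} such that {I_1,…,I_m} and {J_1,…,J_m} are each complete prefix codes consisting of m distinct words. Then the element α = Σ_{i=1}^m y_{I_i} x_{J_i} of L_n satisfies αα* = α*α = 1, i.e., α is a unitary of L_n. -/

import Mathlib

open scoped BigOperators

/-- Defining relations of the Leavitt algebra `L_K(1,n)`. -/
inductive LeavittRel (K : Type) [Field K] (n : ℕ) :
    FreeAlgebra K (Fin n ⊕ Fin n) → FreeAlgebra K (Fin n ⊕ Fin n) → Prop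
  | xy (i j : Fin n) :
      LeavittRel K n (FreeAlgebra.ι K (Sum.inl i) * FreeAlgebra.ι K (Sum.inr j))
        (if i = j then 1 else 0)
  | yx :
      LeavittRel K n (∑ j : Fin n, FreeAlgebra.ι K (Sum.inr j) * FreeAlgebra.ι K (Sum.inl j)) 1

/-- The Leavitt algebra `L_n = L_K(1,n)`. -/
abbrev Leavitt (K : Type) [Field K] (n : ℕ) := RingQuot (LeavittRel K n)

/-- The generator `x_i` of the Leavitt algebra. -/
noncomputable def lx (K : Type) [Field K] (n : ℕ) (i : Fin n) : Leavitt K n :=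
  RingQuot.mkAlgHom K (LeavittRel K n) (FreeAlgebra.ι K (Sum.inl i))

/-- The generator `y_i` of the Leavitt algebra. -/
noncomputable def ly (K : Type) [Field K] (n : ℕ) (i : Fin n) : Leavitt K n :=
  RingQuot.mkAlgHom K (LeavittRel K n) (FreeAlgebra.ι K (Sum.inr i))

/-- `x_I = x_{i_k} ⋯ x_{i_1}` for a word `I = (i_1, …, i_k)`. -/
noncomputable def xW (K : Type) [Field K] (n : ℕ) (I : List (Fin n)) : Leavitt K n :=
  (I.reverse.map (lx K n)).prod

/-- `y_I = y_{i_1} ⋯ y_{i_k}` for a word `I = (i_1, …, i_k)`. -/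
noncomputable def yW (K : Type) [Field K] (n : ℕ) (I : List (Fin n)) : Leavitt K n :=
  (I.map (ly K n)).prod

/-- Auxiliary anti-homomorphism used to construct the involution on `L_n`. -/
noncomputable def leavittStarAux (K : Type) [Field K] (n : ℕ) :
    FreeAlgebra K (Fin n ⊕ Fin n) →ₐ[K] (Leavitt K n)ᵐᵒᵖ :=
  FreeAlgebra.lift K fun s =>
    MulOpposite.op (RingQuot.mkAlgHom K (LeavittRel K n) (FreeAlgebra.ι K s.swap))

theorem leavittStarAux_rel (K : Type) [Field K] (n : ℕ) :
    ∀ ⦃a b : FreeAlgebra K (Fin n ⊕ Fin n)⦄, LeavittRel K n a b →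
      leavittStarAux K n a = leavittStarAux K n b := by
  intro a b h
  induction h with
  | xy i j =>
    have h1 : (RingQuot.mkAlgHom K (LeavittRel K n))
        (FreeAlgebra.ι K (Sum.inl j) * FreeAlgebra.ι K (Sum.inr i)) =
        (RingQuot.mkAlgHom K (LeavittRel K n)) (if j = i then 1 else 0) :=
      RingQuot.mkAlgHom_rel K (LeavittRel.xy j i)
    simp only [leavittStarAux, map_mul, FreeAlgebra.lift_ι_apply, Sum.swap_inl, Sum.swap_inr]
    rw [← MulOpposite.op_mul, ← map_mul, h1]
    by_cases hij : i = j
    · subst hij; simp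
    · simp [hij, Ne.symm hij]
  | yx =>
    have h1 : (RingQuot.mkAlgHom K (LeavittRel K n))
        (∑ j : Fin n, FreeAlgebra.ι K (Sum.inr j) * FreeAlgebra.ι K (Sum.inl j)) =
        (RingQuot.mkAlgHom K (LeavittRel K n)) 1 :=
      RingQuot.mkAlgHom_rel K LeavittRel.yx
    simp only [leavittStarAux, map_sum, map_mul, FreeAlgebra.lift_ι_apply, Sum.swap_inl,
      Sum.swap_inr, map_one]
    have key : ∀ x : Fin n,
        MulOpposite.op ((RingQuot.mkAlgHom K (LeavittRel K n)) (FreeAlgebra.ι K (Sum.inl x))) *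
          MulOpposite.op ((RingQuot.mkAlgHom K (LeavittRel K n)) (FreeAlgebra.ι K (Sum.inr x))) =
        MulOpposite.opAddEquiv ((RingQuot.mkAlgHom K (LeavittRel K n))
          (FreeAlgebra.ι K (Sum.inr x) * FreeAlgebra.ι K (Sum.inl x))) := by
      intro x; rw [map_mul]; rfl
    rw [Finset.sum_congr rfl fun x _ => key x, ← map_sum, ← map_sum, h1, map_one]
    rfl

/-- The involution `*` on the Leavitt algebra, as an algebra map into the opposite algebra. -/
noncomputable def lstarHom (K : Type) [Field K] (n : ℕ) :
    Leavitt K n →ₐ[K] (Leavitt K n)ᵐᵒᵖ :=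
  RingQuot.liftAlgHom K ⟨leavittStarAux K n, leavittStarAux_rel K n⟩

/-- The involution `*` on the Leavitt algebra: the unique `K`-linear ring anti-automorphism
with `x_i* = y_i` and `y_i* = x_i`. -/
noncomputable def lstar (K : Type) [Field K] (n : ℕ) (a : Leavitt K n) : Leavitt K n :=
  (lstarHom K n a).unop

/-- An element of `L_n` which is a finite (possibly empty) sum of monomials `y_I x_J`. -/
def IsSumYX (K : Type) [Field K] (n : ℕ) (a : Leavitt K n) : Prop :=
  ∃ (m : ℕ) (I J : Fin m → List (Fin n)), a = ∑ i, yW K n (I i) * xW K n (J i)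

/-- The induced involution on matrices over `L_n`: `(A*)_{ij} = (A_{ji})*`. -/
noncomputable def mstar (K : Type) [Field K] (n r : ℕ)
    (A : Matrix (Fin r) (Fin r) (Leavitt K n)) : Matrix (Fin r) (Fin r) (Leavitt K n) :=
  fun i j => lstar K n (A j i)

/-- The set `P_{n,r}` of unitary matrices over `L_n` all of whose entries are finite sums of
monomials `y_I x_J`. -/
def PsetM (K : Type) [Field K] (n r : ℕ) : Set (Matrix (Fin r) (Fin r) (Leavitt K n)) :=
  {A | (A * mstar K n r A = 1 ∧ mstar K n r A * A = 1) ∧ ∀ i j, IsSumYX K n (A i j)}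

/-- `B` is a complete prefix code: a finite nonempty set of pairwise incomparable words such
that every word is comparable with some element of `B`. -/
def IsCPC (n : ℕ) (B : Set (List (Fin n))) : Prop :=
  B.Finite ∧ B.Nonempty ∧ (∀ u ∈ B, ∀ v ∈ B, u ≠ v → ¬ u <+: v) ∧
    (∀ w : List (Fin n), ∃ u ∈ B, u <+: w ∨ w <+: u)

/-! For a complete prefix code `B`, the idempotents `y_u x_u` (`u ∈ B`) sum to `1`: if `[] ∉ B`,
then `B` splits by first letter into `j · B_j` with each `B_j` again a complete prefix code, and
`∑_{u ∈ B} y_u x_u = ∑_j y_j (∑_{w ∈ B_j} y_w x_w) x_j = ∑_j y_j x_j = 1`. Incomparable words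
`u ≠ v` satisfy `x_u y_v = 0`, while `x_u y_u = 1`, so for `α = ∑ y_{I_i} x_{J_i}` with
`α* = ∑ y_{J_i} x_{I_i}` the product `α α*` collapses to `∑ y_{I_i} x_{I_i} = 1`; symmetrically
for `α* α`. -/

theorem Finset.sum_mul_sum_of_mul_eq_ite {R ι : Type*} [Semiring R] [Fintype ι] [DecidableEq ι]
    (a b e f : ι → R) (hef : ∀ i k, e i * f k = if i = k then 1 else 0) :
    (∑ i, a i * e i) * (∑ k, f k * b k) = ∑ i, a i * b i := by
  simp_rw [Finset.sum_mul_sum, mul_assoc, ← mul_assoc (e _), hef]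
  simp

theorem Finset.sum_eq_sum_sum_preimage_cons {α M : Type*} [Fintype α] [DecidableEq α]
    [AddCommMonoid M] (B : Finset (List α)) (hB : [] ∉ B) (f : List α → M) :
    ∑ u ∈ B, f u =
      ∑ a, ∑ w ∈ B.preimage (List.cons a) List.cons_injective.injOn, f (a :: w) := by
  rw [Finset.sum_sigma', eq_comm]
  refine Finset.sum_bij (fun p _ => p.1 :: p.2) (by simp) ?_ ?_ (fun _ _ => rfl)
  · rintro ⟨a, w⟩ - ⟨b, v⟩ - h
    simp_all
  · rintro (_ | ⟨a, w⟩) hu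
    · exact absurd hu hB
    · exact ⟨⟨a, w⟩, by simpa using hu, rfl⟩

section Leavitt

variable (K : Type) [Field K] (n : ℕ)

theorem lx_mul_ly (i j : Fin n) : lx K n i * ly K n j = if i = j then 1 else 0 := by
  have h := RingQuot.mkAlgHom_rel K (LeavittRel.xy (K := K) (n := n) i j)
  rw [map_mul] at h
  simpa [lx, ly, apply_ite (RingQuot.mkAlgHom K (LeavittRel K n))] using h

theorem sum_ly_mul_lx : ∑ j : Fin n, ly K n j * lx K n j = 1 := by
  have h := RingQuot.mkAlgHom_rel K (LeavittRel.yx (K := K) (n := n))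
  rw [map_sum, map_one] at h
  simpa [lx, ly] using h

@[simp] theorem xW_nil : xW K n [] = 1 := rfl

@[simp] theorem yW_nil : yW K n [] = 1 := rfl

theorem xW_cons (a : Fin n) (u : List (Fin n)) : xW K n (a :: u) = xW K n u * lx K n a := by
  simp [xW]

theorem yW_cons (a : Fin n) (u : List (Fin n)) : yW K n (a :: u) = ly K n a * yW K n u := by
  simp [yW]

theorem xW_mul_yW_self (u : List (Fin n)) : xW K n u * yW K n u = 1 := by
  induction u with
  | nil => simp
  | cons a u ih =>
    rw [xW_cons, yW_cons, mul_assoc, ← mul_assoc (lx K n a), lx_mul_ly]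
    simp [ih]

theorem xW_mul_yW_eq_zero {u v : List (Fin n)} (huv : ¬u <+: v) (hvu : ¬v <+: u) :
    xW K n u * yW K n v = 0 := by
  induction u generalizing v with
  | nil => exact absurd List.nil_prefix huv
  | cons a u ih =>
    cases v with
    | nil => exact absurd List.nil_prefix hvu
    | cons b v =>
      rw [xW_cons, yW_cons, mul_assoc, ← mul_assoc (lx K n a), lx_mul_ly]
      by_cases hab : a = b
      · subst hab
        simp only [List.cons_prefix_cons, true_and] at huv hvu
        simp [ih huv hvu]
      · simp [hab]

theorem xW_mul_yW_eq_ite {ι : Type*} [DecidableEq ι] {J : ι → List (Fin n)}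
    (hJ : Function.Injective J)
    (hinc : ∀ u ∈ Set.range J, ∀ v ∈ Set.range J, u ≠ v → ¬u <+: v) (i k : ι) :
    xW K n (J i) * yW K n (J k) = if i = k then 1 else 0 := by
  split_ifs with hik
  · rw [hik, xW_mul_yW_self]
  · have hne : J i ≠ J k := hJ.ne hik
    exact xW_mul_yW_eq_zero K n (hinc _ ⟨i, rfl⟩ _ ⟨k, rfl⟩ hne)
      (hinc _ ⟨k, rfl⟩ _ ⟨i, rfl⟩ hne.symm)

theorem lstar_mul (a b : Leavitt K n) : lstar K n (a * b) = lstar K n b * lstar K n a := by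
  simp [lstar]

theorem lstar_sum {ι : Type*} (s : Finset ι) (f : ι → Leavitt K n) :
    lstar K n (∑ i ∈ s, f i) = ∑ i ∈ s, lstar K n (f i) := by
  simp [lstar]

theorem lstar_lx (i : Fin n) : lstar K n (lx K n i) = ly K n i := by
  simp [lstar, lstarHom, lx, ly, leavittStarAux]

theorem lstar_ly (i : Fin n) : lstar K n (ly K n i) = lx K n i := by
  simp [lstar, lstarHom, lx, ly, leavittStarAux]

theorem lstar_xW (u : List (Fin n)) : lstar K n (xW K n u) = yW K n u := by
  induction u with
  | nil => simp [lstar]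
  | cons a u ih =>
    rw [xW_cons, lstar_mul, ih, lstar_lx, yW_cons]

theorem lstar_yW (u : List (Fin n)) : lstar K n (yW K n u) = xW K n u := by
  induction u with
  | nil => simp [lstar]
  | cons a u ih =>
    rw [yW_cons, lstar_mul, ih, lstar_ly, xW_cons]

end Leavitt

section PrefixCode

variable {n : ℕ}

theorem IsCPC.eq_singleton_nil {B : Finset (List (Fin n))} (hB : IsCPC n B) (hnil : [] ∈ B) :
    B = {[]} :=
  Finset.eq_singleton_iff_unique_mem.mpr ⟨hnil, fun u hu =>
    by_contra fun h => hB.2.2.1 [] hnil u hu (Ne.symm h) List.nil_prefix⟩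

theorem IsCPC.preimage_cons {B : Set (List (Fin n))} (hB : IsCPC n B) (hnil : [] ∉ B) (j : Fin n) :
    IsCPC n (List.cons j ⁻¹' B) := by
  obtain ⟨hfin, -, hinc, hcomp⟩ := hB
  have hcomplete : ∀ w, ∃ u ∈ List.cons j ⁻¹' B, u <+: w ∨ w <+: u := by
    intro w
    obtain ⟨_ | ⟨k, u⟩, hu, hcu⟩ := hcomp (j :: w)
    · exact absurd hu hnil
    · simp only [List.cons_prefix_cons] at hcu
      obtain ⟨rfl, h⟩ | ⟨rfl, h⟩ := hcu
      · exact ⟨u, hu, Or.inl h⟩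
      · exact ⟨u, hu, Or.inr h⟩
  refine ⟨hfin.preimage List.cons_injective.injOn, ?_, ?_, hcomplete⟩
  · obtain ⟨u, hu, -⟩ := hcomplete []
    exact ⟨u, hu⟩
  · intro u hu v hv huv h
    exact hinc _ hu _ hv (List.cons_injective.ne huv) (List.cons_prefix_cons.mpr ⟨rfl, h⟩)

end PrefixCode

section Unitary

variable (K : Type) [Field K] (n : ℕ)

theorem sum_yW_mul_xW_eq_one_of_length_le {L : ℕ} {B : Finset (List (Fin n))}
    (hB : IsCPC n B) (hL : ∀ u ∈ B, u.length ≤ L) : ∑ u ∈ B, yW K n u * xW K n u = 1 := by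
  induction L generalizing B with
  | zero =>
    obtain ⟨u, hu⟩ := hB.2.1
    obtain rfl : u = [] := List.length_eq_zero_iff.mp (Nat.le_zero.mp (hL u hu))
    simp [hB.eq_singleton_nil hu]
  | succ L ih =>
    by_cases hnil : [] ∈ B
    · simp [hB.eq_singleton_nil hnil]
    have hchildren (j : Fin n) :
        ∑ w ∈ B.preimage (List.cons j) List.cons_injective.injOn, yW K n w * xW K n w = 1 := by
      refine ih (by simpa using hB.preimage_cons hnil j) fun w hw => ?_
      simpa using hL _ (Finset.mem_preimage.mp hw)
    calc ∑ u ∈ B, yW K n u * xW K n u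
        = ∑ j, ly K n j *
            (∑ w ∈ B.preimage (List.cons j) List.cons_injective.injOn, yW K n w * xW K n w) *
              lx K n j := by
          simp only [Finset.sum_eq_sum_sum_preimage_cons B hnil, yW_cons, xW_cons,
            Finset.mul_sum, Finset.sum_mul, mul_assoc]
      _ = 1 := by simp only [hchildren, mul_one, sum_ly_mul_lx]

variable {K n} {ι : Type*} [Fintype ι]

theorem sum_yW_mul_xW_self_eq_one {I : ι → List (Fin n)} (hI : Function.Injective I)
    (hIc : IsCPC n (Set.range I)) : ∑ i, yW K n (I i) * xW K n (I i) = 1 := by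
  classical
  have hB : IsCPC n ↑(Finset.univ.image I) := by simpa using hIc
  exact (Finset.sum_image hI.injOn).symm.trans
    (sum_yW_mul_xW_eq_one_of_length_le K n hB fun _ => Finset.le_sup (f := List.length))

theorem lstar_sum_yW_mul_xW (I J : ι → List (Fin n)) :
    lstar K n (∑ i, yW K n (I i) * xW K n (J i)) = ∑ i, yW K n (J i) * xW K n (I i) := by
  simp only [lstar_sum, lstar_mul, lstar_xW, lstar_yW]

theorem sum_yW_mul_xW_mul_sum_yW_mul_xW_eq_one [DecidableEq ι] {I J : ι → List (Fin n)}
    (hI : Function.Injective I) (hIc : IsCPC n (Set.range I)) (hJ : Function.Injective J)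
    (hJinc : ∀ u ∈ Set.range J, ∀ v ∈ Set.range J, u ≠ v → ¬u <+: v) :
    (∑ i, yW K n (I i) * xW K n (J i)) * (∑ i, yW K n (J i) * xW K n (I i)) = 1 :=
  (Finset.sum_mul_sum_of_mul_eq_ite (fun i => yW K n (I i)) (fun i => xW K n (I i)) _ _
    (xW_mul_yW_eq_ite K n hJ hJinc)).trans (sum_yW_mul_xW_self_eq_one hI hIc)

end Unitary

theorem unitarity_of_cpc_pair_general (K : Type) [Field K] (n : ℕ)
    (m : ℕ) (I J : Fin m → List (Fin n))
    (hI : Function.Injective I) (hJ : Function.Injective J)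
    (hIc : IsCPC n (Set.range I)) (hJc : IsCPC n (Set.range J))
    (α : Leavitt K n) (hα : α = ∑ i, yW K n (I i) * xW K n (J i)) :
    α * lstar K n α = 1 ∧ lstar K n α * α = 1 := by
  rw [hα, lstar_sum_yW_mul_xW]
  exact ⟨sum_yW_mul_xW_mul_sum_yW_mul_xW_eq_one hI hIc hJ hJc.2.2.1,
    sum_yW_mul_xW_mul_sum_yW_mul_xW_eq_one hJ hJc hI hIc.2.2.1⟩

/-- If `{I_1,…,I_m}` and `{J_1,…,J_m}` are complete prefix codes each consisting of `m`
distinct words, then `α = ∑ y_{I_i} x_{J_i}` is a unitary of `L_n`. -/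
theorem unitarity_of_cpc_pair (K : Type) [Field K] (n : ℕ) (hn : 2 ≤ n)
    (m : ℕ) (hm : 1 ≤ m) (I J : Fin m → List (Fin n))
    (hI : Function.Injective I) (hJ : Function.Injective J)
    (hIc : IsCPC n (Set.range I)) (hJc : IsCPC n (Set.range J))
    (α : Leavitt K n) (hα : α = ∑ i, yW K n (I i) * xW K n (J i)) :
    α * lstar K n α = 1 ∧ lstar K n α * α = 1 :=
  unitarity_of_cpc_pair_general K n m I J hI hJ hIc hJc α hα
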